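/- arXiv:1603.04740 — 2 statements merged into one kernel-verified Lean document; each statement's English description precedes it below -/
import Mathlib

section
/- Let G be an additive abelian group and ν : G × ℤ → ℤ a function (abstracting K, t ↦ ν(D₊(K,t))). Suppose there is a function τ : G → ℤ such that for all a ∈ G and t ∈ ℤ, ν(a,t) = 1 if t ≤ τ(a) and ν(a,t) = 0 if t > τ(a). Suppose furthermore: (i) for all a, b ∈ G and t₁, t₂ ∈ ℤ, if ν(a,t₁) = 1 and ν(b,t₂) = 1 then ν(a+b, t₁+t₂) = 1; and (ii) for all a, b ∈ G and t₁, t₂ ∈ ℤ, if ν(a,t₁) = 0 and t₂ ≥ -τ(-b) then ν(a+b, t₁+t₂) = 0. Then for all a, b ∈ G: τ(a) + τ(b) ≤ τ(a+b) ≤ min(τ(a) - τ(-b), τ(b) - τ(-a)). -/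
/-! The lower bound comes from (i) applied at the thresholds `t = τ a`, `t = τ b`; the upper
bound from (ii) applied just above the threshold of `a`, with `t₂ = -τ (-b)`, and by symmetry
with `a` and `b` exchanged. -/

section Threshold

variable {G : Type*} {ν : G → ℤ → ℤ} {τ : G → ℤ}

lemma le_threshold_of_eq_one (hthr : ∀ a t, (t ≤ τ a → ν a t = 1) ∧ (t > τ a → ν a t = 0))
    {a : G} {t : ℤ} (h : ν a t = 1) : t ≤ τ a := by
  by_contra! hlt
  have := (hthr a t).2 hlt
  omega

lemma threshold_lt_of_eq_zero (hthr : ∀ a t, (t ≤ τ a → ν a t = 1) ∧ (t > τ a → ν a t = 0))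
    {a : G} {t : ℤ} (h : ν a t = 0) : τ a < t := by
  by_contra! hle
  have := (hthr a t).1 hle
  omega

variable [AddCommGroup G]

lemma add_threshold_le_threshold_add
    (hthr : ∀ a t, (t ≤ τ a → ν a t = 1) ∧ (t > τ a → ν a t = 0))
    (h1 : ∀ a b t₁ t₂, ν a t₁ = 1 → ν b t₂ = 1 → ν (a + b) (t₁ + t₂) = 1) (a b : G) :
    τ a + τ b ≤ τ (a + b) :=
  le_threshold_of_eq_one hthr (h1 a b _ _ ((hthr a _).1 le_rfl) ((hthr b _).1 le_rfl))

lemma threshold_add_le_sub_threshold_neg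
    (hthr : ∀ a t, (t ≤ τ a → ν a t = 1) ∧ (t > τ a → ν a t = 0))
    (h2 : ∀ a b t₁ t₂, ν a t₁ = 0 → t₂ ≥ -τ (-b) → ν (a + b) (t₁ + t₂) = 0) (a b : G) :
    τ (a + b) ≤ τ a - τ (-b) := by
  have hzero : ν (a + b) (τ a + 1 + -τ (-b)) = 0 :=
    h2 a b _ _ ((hthr a _).2 (lt_add_one _)) le_rfl
  have := threshold_lt_of_eq_zero hthr hzero
  omega

end Threshold

theorem stmt1 {G : Type*} [AddCommGroup G] (ν : G → ℤ → ℤ) (τ : G → ℤ)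
    (hthr : ∀ a t, (t ≤ τ a → ν a t = 1) ∧ (t > τ a → ν a t = 0))
    (h1 : ∀ a b t₁ t₂, ν a t₁ = 1 → ν b t₂ = 1 → ν (a + b) (t₁ + t₂) = 1)
    (h2 : ∀ a b t₁ t₂, ν a t₁ = 0 → t₂ ≥ -τ (-b) → ν (a + b) (t₁ + t₂) = 0) :
    ∀ a b : G, τ a + τ b ≤ τ (a + b) ∧ τ (a + b) ≤ min (τ a - τ (-b)) (τ b - τ (-a)) := by
  intro a b
  refine ⟨add_threshold_le_threshold_add hthr h1 a b,
    le_min (threshold_add_le_sub_threshold_neg hthr h2 a b) ?_⟩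
  simpa only [add_comm b a] using threshold_add_le_sub_threshold_neg hthr h2 b a
end

section
/- Let p be a polynomial with integer coefficients such that for all integers m and n, p(m) + p(n) ≤ p(m+n) and p(m+n) ≤ p(m) - p(-n), and suppose p(1) = 2 and p(2) = 5. Then p(x) = 3x - 1 for all x. -/
/-!
Taking `n = 1` in the two inequalities traps the forward difference `p(m + 1) - p(m)` between
`p(1) = 2` and `-p(-1)`. A polynomial over `ℤ` with finitely many values is constant, so the
difference is a constant, which `p(2) - p(1) = 3` determines; hence `p` is affine with slope `3`
and `p(0) = p(1) - 3 = -1`.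
-/

open Polynomial

theorem Polynomial.exists_eq_C_of_finite_range {R : Type*} [CommRing R] [IsDomain R] [Infinite R]
    (p : R[X]) (h : (Set.range fun x => p.eval x).Finite) : ∃ c, p = C c := by
  have := h.to_subtype
  obtain ⟨⟨c, _⟩, hc⟩ := Finite.exists_infinite_fiber (Set.rangeFactorization fun x => p.eval x)
  refine ⟨c, eq_of_infinite_eval_eq _ _ ((Set.infinite_coe_iff.mp hc).mono fun x hx => ?_)⟩
  simpa [Set.rangeFactorization] using congrArg Subtype.val hx

theorem Polynomial.exists_eval_add_one_sub_eval_eq_of_mem_Icc (p : ℤ[X]) (a b : ℤ)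
    (h : ∀ n : ℤ, p.eval (n + 1) - p.eval n ∈ Set.Icc a b) :
    ∃ c, ∀ n : ℤ, p.eval (n + 1) - p.eval n = c := by
  obtain ⟨c, hc⟩ := (p.comp (X + 1) - p).exists_eq_C_of_finite_range <|
    (Set.finite_Icc a b).subset <| Set.range_subset_iff.mpr fun n => by simpa using h n
  exact ⟨c, fun n => by simpa using congrArg (eval n) hc⟩

theorem Int.eq_add_zsmul_of_forall_add_one_eq {G : Type*} [AddCommGroup G] {f : ℤ → G} {c : G}
    (hf : ∀ n, f (n + 1) = f n + c) (n : ℤ) : f n = f 0 + n • c := by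
  induction n using Int.induction_on with
  | zero => simp
  | succ k ih => rw [hf, ih, add_smul, one_smul, add_assoc]
  | pred k ih =>
    have hstep := hf (-k - 1)
    rw [sub_add_cancel] at hstep
    rw [sub_smul, one_smul, add_sub_assoc', ← ih, hstep, add_sub_cancel_right]

theorem stmt9 (p : Polynomial ℤ)
    (hsup : ∀ m n : ℤ, p.eval m + p.eval n ≤ p.eval (m + n))
    (hub : ∀ m n : ℤ, p.eval (m + n) ≤ p.eval m - p.eval (-n))
    (h1 : p.eval 1 = 2) (h2 : p.eval 2 = 5) :
    ∀ x : ℤ, p.eval x = 3 * x - 1 := by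
  obtain ⟨c, hc⟩ := p.exists_eval_add_one_sub_eval_eq_of_mem_Icc 2 (-p.eval (-1)) fun n =>
    ⟨by linarith [hsup n 1], by linarith [hub n 1]⟩
  obtain rfl : c = 3 := by rw [← hc 1]; norm_num [h1, h2]
  have h0 : p.eval 0 = -1 := by linarith [hc 0, zero_add (1 : ℤ) ▸ h1]
  intro x
  rw [Int.eq_add_zsmul_of_forall_add_one_eq (f := fun n => p.eval n) (c := 3)
    (fun n => by linarith [hc n]) x, h0, smul_eq_mul]
  ring
end
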